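/- Let G' = (V', A') be a directed graph, and let G be the directed multigraph with vertex set V' × {0,1} and arcs {((v,1),(v,0)), ((v,0),(v,1)) : v ∈ V'}; let ω assign weight 1 to arcs ((u,0),(v,0)) with (u,v) ∈ A' and ∞ otherwise, and let ω_max = |V'|. Then every Eulerian extension E of G with ω(E) ≤ ω_max is a cycle. -/

import Mathlib

/-!  STATEMENT 2: In the Hamiltonian-cycle reduction, every Eulerian extension `E` of the
constructed directed multigraph `G` (on `V' × Bool`, with a two-arc cycle for each `v ∈ V'`)
whose weight is at most `ω_max = |V'|` is a cycle. -/

namespace Stmt2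

variable {V : Type*}

def IsWalkFrom : V → V → List (V × V) → Prop
  | u, w, [] => u = w
  | u, w, a :: L => a.1 = u ∧ IsWalkFrom a.2 w L

def IsEulerian (A : Multiset (V × V)) : Prop :=
  ∃ (v : V) (L : List (V × V)), IsWalkFrom v v L ∧ (↑L : Multiset (V × V)) = A ∧
    ∀ x : V, x = v ∨ ∃ a ∈ L, a.1 = x ∨ a.2 = x

/-- An arc multiset is a cycle: it is the arc set of a closed trail traversing every
vertex at most once (except that the initial and terminal vertices coincide). -/
def IsCycle (E : Multiset (V × V)) : Prop :=
  ∃ (v : V) (L : List (V × V)), IsWalkFrom v v L ∧ (↑L : Multiset (V × V)) = E ∧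
    (L.map Prod.fst).Nodup


section Aux

variable {V'' : Type*}

/-- Boolean predicate: both endpoints of the arc are on the `false` level. -/
def Pb : (V'' × Bool) × (V'' × Bool) → Bool := fun a => !a.1.2 && !a.2.2

lemma Pb_iff (a : (V'' × Bool) × (V'' × Bool)) :
    Pb a = true ↔ a.1.2 = false ∧ a.2.2 = false := by
  simp [Pb]

/-- Filtering a walk to the `Pb` arcs yields a walk on the `false` level, provided
every discarded arc preserves the first coordinate. -/
lemma walk_filter (L : List ((V'' × Bool) × (V'' × Bool))) :
    ∀ u w, IsWalkFrom u w L → (∀ a ∈ L, Pb a = true ∨ a.1.1 = a.2.1) →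
      IsWalkFrom (u.1, false) (w.1, false) (L.filter Pb) := by
  induction L with
  | nil =>
    intro u w h _
    simp only [IsWalkFrom] at h
    simp [IsWalkFrom, h]
  | cons a T ih =>
    intro u w h hs
    obtain ⟨h1, h2⟩ := h
    have hT := ih a.2 w h2 (fun b hb => hs b (List.mem_cons_of_mem _ hb))
    cases hPb : Pb a with
    | true =>
      rw [List.filter_cons_of_pos hPb]
      rw [Pb_iff] at hPb
      have ha2 : a.2 = (a.2.1, false) := by rw [← hPb.2, Prod.mk.eta]
      refine ⟨?_, ?_⟩
      · rw [← h1, ← hPb.1, Prod.mk.eta]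
      · rw [ha2]; exact hT
    | false =>
      rw [List.filter_cons_of_neg (by simp [hPb])]
      have hc : a.1.1 = a.2.1 := by
        rcases hs a (List.mem_cons_self) with hp | hc
        · rw [hp] at hPb; exact absurd hPb (by simp)
        · exact hc
      rw [← h1, hc]
      exact hT

/-- Along a walk whose non-`Pb` arcs preserve the first coordinate, the first
coordinate of the start equals that of the end unless some `Pb` arc occurs. -/
lemma endReach (L : List ((V'' × Bool) × (V'' × Bool))) :
    ∀ u w, IsWalkFrom u w L → (∀ a ∈ L, Pb a = true ∨ a.1.1 = a.2.1) →
      u.1 = w.1 ∨ ∃ b ∈ L, Pb b = true ∧ u.1 = b.1.1 := by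
  induction L with
  | nil =>
    intro u w h _
    simp only [IsWalkFrom] at h
    exact Or.inl (by rw [h])
  | cons a T ih =>
    intro u w h hs
    obtain ⟨h1, h2⟩ := h
    cases hPb : Pb a with
    | true => exact Or.inr ⟨a, List.mem_cons_self, hPb, by rw [← h1]⟩
    | false =>
      have hc : a.1.1 = a.2.1 := by
        rcases hs a (List.mem_cons_self) with hp | hc
        · rw [hp] at hPb; exact absurd hPb (by simp)
        · exact hc
      have hu : u.1 = a.2.1 := by rw [← h1, hc]
      rcases ih a.2 w h2 (fun b hb => hs b (List.mem_cons_of_mem _ hb)) with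
        h' | ⟨b, hb, hb1, hb2⟩
      · exact Or.inl (hu.trans h')
      · exact Or.inr ⟨b, List.mem_cons_of_mem _ hb, hb1, hu.trans hb2⟩

/-- Every arc's head is either the final vertex (in first coordinate) or the tail of
some `Pb` arc of the walk. -/
lemma forwardReach (L : List ((V'' × Bool) × (V'' × Bool))) :
    ∀ u w, IsWalkFrom u w L → (∀ a ∈ L, Pb a = true ∨ a.1.1 = a.2.1) →
      ∀ a ∈ L, a.2.1 = w.1 ∨ ∃ b ∈ L, Pb b = true ∧ a.2.1 = b.1.1 := by
  induction L with
  | nil => intro u w _ _ a ha; exact absurd ha List.not_mem_nil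
  | cons c T ih =>
    intro u w h hs a ha
    obtain ⟨h1, h2⟩ := h
    have hsT := fun b hb => hs b (List.mem_cons_of_mem _ hb)
    rcases List.mem_cons.1 ha with rfl | haT
    · rcases endReach T a.2 w h2 hsT with h' | ⟨b, hb, hb1, hb2⟩
      · exact Or.inl h'
      · exact Or.inr ⟨b, List.mem_cons_of_mem _ hb, hb1, hb2⟩
    · rcases ih c.2 w h2 hsT a haT with h' | ⟨b, hb, hb1, hb2⟩
      · exact Or.inl h'
      · exact Or.inr ⟨b, List.mem_cons_of_mem _ hb, hb1, hb2⟩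

/-- A list over a fintype containing every element, of length at most the cardinality,
has no duplicates. -/
lemma nodup_of_covers {α : Type*} [Fintype α] [DecidableEq α] (l : List α)
    (hc : ∀ x : α, x ∈ l) (hl : l.length ≤ Fintype.card α) : l.Nodup := by
  have h1 : l.dedup.Nodup := l.nodup_dedup
  have h2 : l.dedup.toFinset = Finset.univ := by
    ext x; simp [List.mem_dedup, hc x]
  have h3 : l.dedup.length = Fintype.card α := by
    rw [← List.toFinset_card_of_nodup h1, h2, Fintype.card]
  have h4 : l.dedup.length = l.length :=
    le_antisymm (l.dedup_sublist.length_le) (by omega)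
  exact List.dedup_eq_self.1 (l.dedup_sublist.eq_of_length h4)

end Aux

variable {V' : Type*} [Fintype V'] [DecidableEq V']

/-- The arcs of the constructed multigraph: `((v,1),(v,0))` and `((v,0),(v,1))`
for every `v ∈ V'` (`true` plays the role of `1` and `false` of `0`). -/
def base (V' : Type*) [Fintype V'] : Multiset ((V' × Bool) × (V' × Bool)) :=
  (Finset.univ.val : Multiset V').bind fun v =>
    {((v, true), (v, false)), ((v, false), (v, true))}

/-- The weight function: arcs `((u,0),(v,0))` with `(u,v) ∈ A'` get weight `1`,
all other arcs get weight `∞`. -/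
def wt (A' : Set (V' × V')) [DecidablePred (· ∈ A')]
    (a : (V' × Bool) × (V' × Bool)) : ℕ∞ :=
  if a.1.2 = false ∧ a.2.2 = false ∧ (a.1.1, a.2.1) ∈ A' then 1 else ⊤

/-- Total weight of an arc multiset. -/
def weight (A' : Set (V' × V')) [DecidablePred (· ∈ A')]
    (E : Multiset ((V' × Bool) × (V' × Bool))) : ℕ∞ :=
  (E.map (wt A')).sum

theorem eulerianExtension_isCycle [Nonempty V']
    (A' : Set (V' × V')) [DecidablePred (· ∈ A')]
    (E : Multiset ((V' × Bool) × (V' × Bool)))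
    (hext : IsEulerian (base V' + E))
    (hwt : weight A' E ≤ (Fintype.card V' : ℕ∞)) :
    IsCycle E := by
  classical
  obtain ⟨v0, L, hwalk, hL, -⟩ := hext
  -- every arc of `E` has weight `1` and satisfies `Pb`
  have hEarc : ∀ a ∈ E, wt A' a = 1 ∧ Pb a = true := by
    intro a ha
    have hle : wt A' a ≤ weight A' E :=
      Multiset.single_le_sum (fun x _ => zero_le) _ (Multiset.mem_map_of_mem _ ha)
    have hne : wt A' a ≠ ⊤ := by
      intro htop
      rw [htop] at hle
      have : (Fintype.card V' : ℕ∞) = ⊤ := top_le_iff.1 (hle.trans hwt)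
      exact (WithTop.natCast_ne_top _) this
    unfold wt at hne ⊢
    split at hne
    · next h => exact ⟨if_pos h, by simp [Pb, h.1, h.2.1]⟩
    · exact absurd rfl hne
  -- cardinality bound on `E`
  have hcard : Multiset.card E ≤ Fintype.card V' := by
    have hrep : E.map (wt A') = Multiset.replicate (Multiset.card E) 1 := by
      rw [← Multiset.card_map (wt A') E]
      exact Multiset.eq_replicate_card.2 (by
        intro b hb
        obtain ⟨a, ha, rfl⟩ := Multiset.mem_map.1 hb
        exact (hEarc a ha).1)
    have : weight A' E = (Multiset.card E : ℕ∞) := by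
      rw [weight, hrep, Multiset.sum_replicate, nsmul_eq_mul, mul_one]
    rw [this] at hwt
    exact_mod_cast hwt
  -- base arcs preserve the first coordinate and are not `Pb`
  have hbase : ∀ a ∈ base V', a.1.1 = a.2.1 ∧ Pb a = false := by
    intro a ha
    simp only [base, Multiset.mem_bind] at ha
    obtain ⟨v, -, hv⟩ := ha
    simp only [Multiset.insert_eq_cons, Multiset.mem_cons, Multiset.mem_singleton] at hv
    rcases hv with h | h <;> subst h <;> exact ⟨rfl, by simp [Pb]⟩
  -- side condition for the walk lemmas
  have hside : ∀ a ∈ L, Pb a = true ∨ a.1.1 = a.2.1 := by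
    intro a ha
    have : a ∈ base V' + E := by rw [← hL]; exact ha
    rcases Multiset.mem_add.1 this with h | h
    · exact Or.inr (hbase a h).1
    · exact Or.inl (hEarc a h).2
  -- the filtered list is exactly `E`
  set L' := L.filter Pb with hL'def
  have hE' : (↑L' : Multiset _) = E := by
    have : (Multiset.filter (fun a => Pb a = true) (↑L : Multiset _)) = E := by
      rw [hL, Multiset.filter_add]
      rw [Multiset.filter_eq_self.2 (fun a ha => (hEarc a ha).2),
        Multiset.filter_eq_nil.2 (fun a ha h => by rw [(hbase a ha).2] at h; cases h),
        zero_add]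
    rw [← this, Multiset.filter_coe]
    congr 1
    simp
    rfl
  have hwalk' : IsWalkFrom (v0.1, false) (v0.1, false) L' :=
    walk_filter L v0 v0 hwalk hside
  -- trivial case `E = 0`
  by_cases hE0 : E = 0
  · subst hE0
    exact ⟨(Classical.arbitrary V', false), [], rfl, rfl, List.nodup_nil⟩
  have hL'ne : L' ≠ [] := by
    intro h; rw [h] at hE'; exact hE0 hE'.symm
  -- the sources of `L'` cover all of `V'`
  have hcov : ∀ x : V', x ∈ L'.map (fun a => a.1.1) := by
    intro x
    have hc : ((x, false), (x, true)) ∈ L := by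
      rw [← Multiset.mem_coe, hL, Multiset.mem_add]
      left
      simp only [base, Multiset.mem_bind]
      exact ⟨x, Finset.mem_univ x, by simp⟩
    rcases forwardReach L v0 v0 hwalk hside _ hc with h | ⟨b, hb, hb1, hb2⟩
    · obtain ⟨c, T, hct⟩ := List.exists_cons_of_ne_nil hL'ne
      have hh : c.1 = (v0.1, false) := by
        rw [hct] at hwalk'; exact hwalk'.1
      simp only [List.mem_map]
      exact ⟨c, by rw [hct]; exact List.mem_cons_self, by rw [hh, ← h]⟩
    · simp only [List.mem_map]
      exact ⟨b, List.mem_filter.2 ⟨hb, hb1⟩, hb2.symm⟩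
  have hlen : (L'.map (fun a => a.1.1)).length ≤ Fintype.card V' := by
    rw [List.length_map]
    have : L'.length = Multiset.card E := by
      rw [← hE']; rfl
    rw [this]; exact hcard
  have hnd : (L'.map (fun a => a.1.1)).Nodup := nodup_of_covers _ hcov hlen
  refine ⟨(v0.1, false), L', hwalk', hE', ?_⟩
  have : L'.map (fun a => a.1.1) = (L'.map Prod.fst).map Prod.fst := by
    rw [List.map_map]; rfl
  rw [this] at hnd
  exact hnd.of_map _


end Stmt2
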